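/- arXiv:2006.06090 — 2 statements merged into one kernel-verified Lean document; each statement's English description precedes it below -/
import Mathlib

section
/- Let r, s ≥ 1 with 1/r + 1/s = 1, let B ∈ ℝ^{p×K}, and let l : ℝ^K → ℝ be L-Lipschitz with respect to the ℓ_r norm. Then the multivariate regression loss h_B(x, y) := l(y − B'x), viewed as a function of z = (x, y) ∈ ℝ^{p+K}, is Lipschitz with respect to the ℓ_r norm on ℝ^{p+K} with Lipschitz constant L·‖v‖_s, where v := (v_1, ..., v_p, 1, ..., 1) ∈ ℝ^{p+K} with v_i = Σ_{j=1}^K |B_{ij}|; that is, |h_B(x_1, y_1) − h_B(x_2, y_2)| ≤ L·‖v‖_s · ‖(x_1, y_1) − (x_2, y_2)‖_r for all (x_1, y_1), (x_2, y_2) ∈ ℝ^{p+K}. -/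
/-!
The increment of the loss argument is `(y₁ - y₂) - Bᵀ (x₁ - x₂)`, a combination of the rows
`-B_i` and the unit vectors `e_j` with the coordinates of `z₁ - z₂` as coefficients.  By the
triangle inequality its ℓ_r norm is at most `Σ_i v_i |(z₁ - z₂)_i|`, because a row has ℓ_r norm
at most its ℓ_1 norm `v_i` and a unit vector has norm `1`; Hölder's inequality bounds this sum
by `‖v‖_s ‖z₁ - z₂‖_r`, and the Lipschitz bound on `l` finishes the proof.
-/

open Real Matrix Finset

/-- The ℓ_r norm of a vector z ∈ ℝ^d: (Σ_i |z_i|^r)^(1/r). -/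
noncomputable def lnorm {d : ℕ} (r : ℝ) (z : Fin d → ℝ) : ℝ :=
  (∑ i, |z i| ^ r) ^ (1 / r)

/-- The L_{r,s} matrix norm: the ℓ_s norm of the vector of ℓ_r norms of the columns. -/
noncomputable def Lnorm {m n : ℕ} (r s : ℝ) (A : Matrix (Fin m) (Fin n) ℝ) : ℝ :=
  (∑ j, (∑ i, |A i j| ^ r) ^ (s / r)) ^ (1 / s)

section lnorm

variable {d : ℕ} {r : ℝ}

theorem lnorm_eq_norm_toLp (hr : 0 < r) (z : Fin d → ℝ) :
    lnorm r z = ‖WithLp.toLp (ENNReal.ofReal r) z‖ := by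
  rw [PiLp.norm_eq_sum (by rwa [ENNReal.toReal_ofReal hr.le])]
  simp [lnorm, ENNReal.toReal_ofReal hr.le]

theorem lnorm_zero (hr : 0 < r) : lnorm r (0 : Fin d → ℝ) = 0 := by
  simp [lnorm, Real.zero_rpow hr.ne', Real.zero_rpow (inv_ne_zero hr.ne')]

theorem lnorm_abs (z : Fin d → ℝ) : lnorm r (fun i => |z i|) = lnorm r z := by
  simp [lnorm]

theorem lnorm_single (hr : 1 ≤ r) (j : Fin d) (a : ℝ) : lnorm r (Pi.single j a) = |a| := by
  have : Fact (1 ≤ ENNReal.ofReal r) := ⟨by simpa using hr⟩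
  rw [lnorm_eq_norm_toLp (one_pos.trans_le hr), PiLp.toLp_single, PiLp.norm_single,
    Real.norm_eq_abs]

theorem lnorm_smul (hr : 1 ≤ r) (c : ℝ) (z : Fin d → ℝ) : lnorm r (c • z) = |c| * lnorm r z := by
  have : Fact (1 ≤ ENNReal.ofReal r) := ⟨by simpa using hr⟩
  simp only [lnorm_eq_norm_toLp (one_pos.trans_le hr), WithLp.toLp_smul, norm_smul,
    Real.norm_eq_abs]

theorem lnorm_sub_le (hr : 1 ≤ r) (u v : Fin d → ℝ) : lnorm r (u - v) ≤ lnorm r u + lnorm r v := by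
  have : Fact (1 ≤ ENNReal.ofReal r) := ⟨by simpa using hr⟩
  simp only [lnorm_eq_norm_toLp (one_pos.trans_le hr), WithLp.toLp_sub]
  exact norm_sub_le _ _

theorem lnorm_sum_le {ι : Type*} (hr : 1 ≤ r) (s : Finset ι) (f : ι → Fin d → ℝ) :
    lnorm r (∑ i ∈ s, f i) ≤ ∑ i ∈ s, lnorm r (f i) := by
  have : Fact (1 ≤ ENNReal.ofReal r) := ⟨by simpa using hr⟩
  simp only [lnorm_eq_norm_toLp (one_pos.trans_le hr), WithLp.toLp_sum]
  exact norm_sum_le _ _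

theorem lnorm_le_sum_abs (hr : 1 ≤ r) (z : Fin d → ℝ) : lnorm r z ≤ ∑ i, |z i| :=
  calc lnorm r z = lnorm r (∑ i, Pi.single i (z i)) := by rw [Finset.univ_sum_single]
    _ ≤ ∑ i, lnorm r (Pi.single i (z i)) := lnorm_sum_le hr _ _
    _ = ∑ i, |z i| := by simp only [lnorm_single hr]

theorem sum_mul_le_lnorm_mul_lnorm {s : ℝ} (hsr : s.HolderConjugate r) (a b : Fin d → ℝ) :
    ∑ i, a i * b i ≤ lnorm s a * lnorm r b :=
  Real.inner_le_Lp_mul_Lq _ _ _ hsr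

end lnorm

theorem nonneg_of_abs_sub_le_mul_lnorm {K : ℕ} {r L : ℝ} (hK : 0 < K) (hr : 1 ≤ r)
    {l : (Fin K → ℝ) → ℝ} (hl : ∀ u v, |l u - l v| ≤ L * lnorm r (u - v)) : 0 ≤ L := by
  have h := hl (Pi.single ⟨0, hK⟩ 1) 0
  rw [sub_zero, lnorm_single hr, abs_one, mul_one] at h
  exact (abs_nonneg _).trans h

theorem append_sub_append {m n : ℕ} (x₁ x₂ : Fin m → ℝ) (y₁ y₂ : Fin n → ℝ) :
    Fin.append x₁ y₁ - Fin.append x₂ y₂ = Fin.append (x₁ - x₂) (y₁ - y₂) := by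
  ext i
  refine Fin.addCases (fun i => ?_) (fun j => ?_) i <;> simp

section regression

variable {p K : ℕ} {r : ℝ}

theorem lnorm_transpose_mulVec_le (hr : 1 ≤ r) (B : Matrix (Fin p) (Fin K) ℝ) (x : Fin p → ℝ) :
    lnorm r (Bᵀ *ᵥ x) ≤ ∑ i, (∑ j, |B i j|) * |x i| :=
  calc lnorm r (Bᵀ *ᵥ x) = lnorm r (∑ i, x i • B i) := by rw [mulVec_transpose, vecMul_eq_sum]
    _ ≤ ∑ i, lnorm r (x i • B i) := lnorm_sum_le hr _ _
    _ = ∑ i, lnorm r (B i) * |x i| := by simp only [lnorm_smul hr, mul_comm]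
    _ ≤ ∑ i, (∑ j, |B i j|) * |x i| := by gcongr with i; exact lnorm_le_sum_abs hr _

theorem lnorm_sub_transpose_mulVec_le (hr : 1 ≤ r) (B : Matrix (Fin p) (Fin K) ℝ)
    (x : Fin p → ℝ) (y : Fin K → ℝ) :
    lnorm r (y - Bᵀ *ᵥ x) ≤
      ∑ i, Fin.append (fun i => ∑ j, |B i j|) (fun _ : Fin K => (1:ℝ)) i * |Fin.append x y i| := by
  simp only [Fin.sum_univ_add, Fin.append_left, Fin.append_right, one_mul]
  calc lnorm r (y - Bᵀ *ᵥ x) ≤ lnorm r y + lnorm r (Bᵀ *ᵥ x) := lnorm_sub_le hr _ _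
    _ ≤ ∑ j, |y j| + ∑ i, (∑ j, |B i j|) * |x i| :=
        add_le_add (lnorm_le_sum_abs hr y) (lnorm_transpose_mulVec_le hr B x)
    _ = _ := add_comm _ _

end regression

/-- If l : ℝ^K → ℝ is L-Lipschitz w.r.t. the ℓ_r norm and 1/r + 1/s = 1, then
h_B(x, y) = l(y − B'x) is Lipschitz in z = (x, y) w.r.t. the ℓ_r norm on ℝ^{p+K} with
constant L·‖v‖_s, where v = (v_1, ..., v_p, 1, ..., 1) with v_i = Σ_j |B_{ij}|. -/
theorem mlr_1s_lipschitz {p K : ℕ} (r s L : ℝ)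
    (hr : 1 ≤ r) (hs : 1 ≤ s) (hrs : 1 / r + 1 / s = 1)
    (B : Matrix (Fin p) (Fin K) ℝ) (l : (Fin K → ℝ) → ℝ)
    (hl : ∀ u v : Fin K → ℝ, |l u - l v| ≤ L * lnorm r (u - v)) :
    ∀ (x₁ x₂ : Fin p → ℝ) (y₁ y₂ : Fin K → ℝ),
      |l (y₁ - Bᵀ.mulVec x₁) - l (y₂ - Bᵀ.mulVec x₂)| ≤
        L * lnorm s (Fin.append (fun i => ∑ j, |B i j|) (fun _ : Fin K => (1:ℝ)))
          * lnorm r (Fin.append x₁ y₁ - Fin.append x₂ y₂) := by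
  intro x₁ x₂ y₁ y₂
  rcases Nat.eq_zero_or_pos K with rfl | hK
  -- For K = 0 the hypothesis on l does not force 0 ≤ L, but then v = 0.
  · have hv : Fin.append (fun i => ∑ j : Fin 0, |B i j|) (fun _ : Fin 0 => (1:ℝ)) = 0 := by
      ext i
      simp [Fin.append_right_nil]
    rw [Subsingleton.elim (y₁ - Bᵀ *ᵥ x₁) (y₂ - Bᵀ *ᵥ x₂), hv, lnorm_zero (by linarith)]
    simp
  have hL : 0 ≤ L := nonneg_of_abs_sub_le_mul_lnorm hK hr hl
  have hsr : s.HolderConjugate r :=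
    ⟨by simpa [one_div, add_comm] using hrs, by linarith, by linarith⟩
  set v := Fin.append (fun i => ∑ j, |B i j|) (fun _ : Fin K => (1:ℝ))
  set Δ := Fin.append (x₁ - x₂) (y₁ - y₂)
  rw [append_sub_append]
  calc |l (y₁ - Bᵀ *ᵥ x₁) - l (y₂ - Bᵀ *ᵥ x₂)|
      ≤ L * lnorm r ((y₁ - Bᵀ *ᵥ x₁) - (y₂ - Bᵀ *ᵥ x₂)) := hl _ _
    _ = L * lnorm r ((y₁ - y₂) - Bᵀ *ᵥ (x₁ - x₂)) := by rw [mulVec_sub, sub_sub_sub_comm]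
    _ ≤ L * ∑ i, v i * |Δ i| := by gcongr; exact lnorm_sub_transpose_mulVec_le hr B _ _
    _ ≤ L * (lnorm s v * lnorm r Δ) := by
        gcongr
        simpa only [lnorm_abs] using sum_mul_le_lnorm_mul_lnorm hsr v (fun i => |Δ i|)
    _ = L * lnorm s v * lnorm r Δ := (mul_assoc _ _ _).symm
end

section
/- Let r, s ≥ 1 with 1/r + 1/s = 1 and let B ∈ ℝ^{p×K}. For every one-hot label vector y ∈ {e_1, ..., e_K} ⊂ ℝ^K and all x_1, x_2 ∈ ℝ^p, the multiclass logistic regression log-loss satisfies |h_B(x_1, y) − h_B(x_2, y)| ≤ (K^{1/s}·‖B‖_{s,r} + ‖B‖_{s,1}) · ‖x_1 − x_2‖_r; i.e., for fixed label, x ↦ h_B(x, y) is Lipschitz with respect to the ℓ_r norm with constant K^{1/s}‖B‖_{s,r} + ‖B‖_{s,1}, the regularization coefficient (per unit of ε) of the MLG-SR relaxation. -/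
open Real Matrix Finset

/-- The log-sum-exp function on ℝ^K. -/
noncomputable def lse {K : ℕ} (u : Fin K → ℝ) : ℝ := Real.log (∑ k, Real.exp (u k))

/-- The multiclass logistic regression log-loss: log(Σ_k e^{(B'x)_k}) − y'B'x. -/
noncomputable def logloss {p K : ℕ} (B : Matrix (Fin p) (Fin K) ℝ)
    (x : Fin p → ℝ) (y : Fin K → ℝ) : ℝ :=
  lse (Bᵀ.mulVec x) - y ⬝ᵥ Bᵀ.mulVec x


/- Both terms of the loss are controlled coordinatewise: by Hölder, the `k`-th coordinate of
`Bᵀ (x₁ - x₂)` is at most `‖B_{·k}‖_s ‖x₁ - x₂‖_r`. Log-sum-exp is 1-Lipschitz for the sup norm,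
so its increment is at most the largest column norm, which is bounded by `‖B‖_{s,r}`; the linear
term `(Bᵀ x)_i` only sees column `i`, whose norm is bounded by `‖B‖_{s,1} = Σ_k ‖B_{·k}‖_s`. -/

lemma lnorm_nonneg {d : ℕ} (r : ℝ) (z : Fin d → ℝ) : 0 ≤ lnorm r z := by
  unfold lnorm; positivity

lemma abs_sum_mul_le_lnorm_mul_lnorm {n : ℕ} {s r : ℝ} (hsr : s.HolderConjugate r)
    (f g : Fin n → ℝ) : |∑ j, f j * g j| ≤ lnorm s f * lnorm r g := by
  calc |∑ j, f j * g j| ≤ ∑ j, |f j| * |g j| := by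
        simpa only [abs_mul] using abs_sum_le_sum_abs (fun j => f j * g j) univ
    _ ≤ lnorm s f * lnorm r g := by
        simpa only [abs_abs, lnorm] using
          Real.inner_le_Lp_mul_Lq univ (fun j => |f j|) (fun j => |g j|) hsr

lemma lse_le_lse_add_of_forall_sub_le {K : ℕ} [NeZero K] (u v : Fin K → ℝ) {c : ℝ}
    (h : ∀ k, u k - v k ≤ c) : lse u ≤ lse v + c := by
  have hv : 0 < ∑ k, exp (v k) := sum_pos (fun k _ => exp_pos _) univ_nonempty
  have hu : 0 < ∑ k, exp (u k) := sum_pos (fun k _ => exp_pos _) univ_nonempty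
  have hle : ∑ k, exp (u k) ≤ exp c * ∑ k, exp (v k) := by
    rw [mul_sum]
    exact sum_le_sum fun k _ => by rw [← exp_add]; exact exp_le_exp.mpr (by linarith [h k])
  calc lse u ≤ log (exp c * ∑ k, exp (v k)) := log_le_log hu hle
    _ = lse v + c := by rw [log_mul (exp_ne_zero c) hv.ne', log_exp, lse, add_comm]

lemma abs_lse_sub_lse_le {K : ℕ} [NeZero K] (u v : Fin K → ℝ) {c : ℝ}
    (h : ∀ k, |u k - v k| ≤ c) : |lse u - lse v| ≤ c := by
  have huv := lse_le_lse_add_of_forall_sub_le u v fun k => (abs_le.mp (h k)).2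
  have hvu := lse_le_lse_add_of_forall_sub_le v u fun k => by
    linarith [(abs_le.mp (h k)).1]
  exact abs_le.mpr ⟨by linarith, by linarith⟩

lemma lnorm_col_le_Lnorm {m n : ℕ} {s r : ℝ} (hr : 0 < r) (A : Matrix (Fin m) (Fin n) ℝ)
    (k : Fin n) : lnorm s (fun j => A j k) ≤ Lnorm s r A := by
  have hpow : lnorm s (fun j => A j k) ^ r = (∑ j, |A j k| ^ s) ^ (r / s) := by
    rw [lnorm, ← rpow_mul (by positivity), one_div_mul_eq_div]
  calc lnorm s (fun j => A j k) = (lnorm s (fun j => A j k) ^ r) ^ (1 / r) := by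
        rw [one_div, rpow_rpow_inv (lnorm_nonneg s _) hr.ne']
    _ ≤ Lnorm s r A := by
        rw [hpow, Lnorm]
        gcongr
        exact single_le_sum (f := fun k' => (∑ j, |A j k'| ^ s) ^ (r / s))
          (fun k' _ => by positivity) (mem_univ k)

lemma Lnorm_one_eq_sum_lnorm_col {m n : ℕ} (s : ℝ) (A : Matrix (Fin m) (Fin n) ℝ) :
    Lnorm s 1 A = ∑ k, lnorm s (fun j => A j k) := by
  simp only [Lnorm, lnorm, div_one, one_div, rpow_one]

lemma lnorm_col_le_Lnorm_one {m n : ℕ} (s : ℝ) (A : Matrix (Fin m) (Fin n) ℝ) (k : Fin n) :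
    lnorm s (fun j => A j k) ≤ Lnorm s 1 A := by
  rw [Lnorm_one_eq_sum_lnorm_col]
  exact single_le_sum (f := fun k' => lnorm s (fun j => A j k')) (fun k' _ => lnorm_nonneg s _)
    (mem_univ k)

lemma abs_transpose_mulVec_sub_le {m n : ℕ} {s r : ℝ} (hsr : s.HolderConjugate r)
    (A : Matrix (Fin m) (Fin n) ℝ) (x₁ x₂ : Fin m → ℝ) (k : Fin n) :
    |(Aᵀ *ᵥ x₁) k - (Aᵀ *ᵥ x₂) k| ≤ lnorm s (fun j => A j k) * lnorm r (x₁ - x₂) := by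
  rw [← Pi.sub_apply, ← mulVec_sub]
  exact abs_sum_mul_le_lnorm_mul_lnorm hsr (fun j => A j k) (x₁ - x₂)

lemma logloss_single {p K : ℕ} (B : Matrix (Fin p) (Fin K) ℝ) (x : Fin p → ℝ) (i : Fin K) :
    logloss B x (Pi.single i 1) = lse (Bᵀ *ᵥ x) - (Bᵀ *ᵥ x) i := by
  rw [logloss, single_one_dotProduct]

/-- For 1/r + 1/s = 1 and a one-hot label y = e_i, the log-loss is
Lipschitz in x w.r.t. the ℓ_r norm with constant K^{1/s}‖B‖_{s,r} + ‖B‖_{s,1}. -/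
theorem mlg_sr_lipschitz {p K : ℕ} (r s : ℝ)
    (hr : 1 ≤ r) (hs : 1 ≤ s) (hrs : 1 / r + 1 / s = 1)
    (B : Matrix (Fin p) (Fin K) ℝ) (i : Fin K) (x₁ x₂ : Fin p → ℝ) :
    |logloss B x₁ (Pi.single i 1) - logloss B x₂ (Pi.single i 1)| ≤
      ((K : ℝ) ^ (1 / s) * Lnorm s r B + Lnorm s 1 B) * lnorm r (x₁ - x₂) := by
  have : NeZero K := ⟨i.pos.ne'⟩
  have hsr : s.HolderConjugate r :=
    { inv_add_inv_eq_inv := by simpa only [one_div, inv_one, add_comm] using hrs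
      left_pos := by linarith
      right_pos := by linarith }
  set u := Bᵀ *ᵥ x₁
  set v := Bᵀ *ᵥ x₂
  set δ := lnorm r (x₁ - x₂)
  have hδ : 0 ≤ δ := lnorm_nonneg r _
  have hlse : |lse u - lse v| ≤ Lnorm s r B * δ := abs_lse_sub_lse_le u v fun k =>
    (abs_transpose_mulVec_sub_le hsr B x₁ x₂ k).trans
      (mul_le_mul_of_nonneg_right (lnorm_col_le_Lnorm (by linarith) B k) hδ)
  have hlin : |u i - v i| ≤ Lnorm s 1 B * δ :=
    (abs_transpose_mulVec_sub_le hsr B x₁ x₂ i).trans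
      (mul_le_mul_of_nonneg_right (lnorm_col_le_Lnorm_one s B i) hδ)
  have hK : 1 ≤ (K : ℝ) ^ (1 / s) :=
    one_le_rpow (Nat.one_le_cast.mpr i.pos) (by positivity)
  have hLnorm : 0 ≤ Lnorm s r B := by unfold Lnorm; positivity
  rw [logloss_single, logloss_single, sub_sub_sub_comm]
  calc |lse u - lse v - (u i - v i)| ≤ |lse u - lse v| + |u i - v i| := abs_sub _ _
    _ ≤ Lnorm s r B * δ + Lnorm s 1 B * δ := add_le_add hlse hlin
    _ ≤ ((K : ℝ) ^ (1 / s) * Lnorm s r B + Lnorm s 1 B) * δ := by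
        rw [add_mul]
        gcongr
        exact le_mul_of_one_le_left hLnorm hK
end
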